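/- arXiv:2409.01435 — 3 statements merged into one kernel-verified Lean document; each statement's English description precedes it below -/
import Mathlib

section
/- Let S be a nonempty finite index set, let x_i ∈ ℝ^d and K_i ⊆ {1,…,d} for each i ∈ S, and let y ∈ ℝ^d. Then ‖(1/|S|)·∑_{i∈S} x_i|_{K_i} − y‖² ≤ (1/|S|)·∑_{i∈S} ( ‖(x_i − y)|_{K_i}‖² + ‖y|_{K_i^c}‖² ), where K_i^c denotes the complement of K_i in {1,…,d}. -/
/-!
Write `w i = x_i|_{K_i} - y` as `(x_i - y)|_{K_i} - y|_{K_iᶜ}`: the two pieces live on disjoint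
coordinates, so by Pythagoras `‖w i‖²` is exactly the `i`-th summand on the right. The left side
is `‖(1/|S|) ∑ w i‖²`, which is at most the average of the `‖w i‖²` by convexity of `‖·‖²`.
-/

noncomputable def mask {d : ℕ} (x : EuclideanSpace ℝ (Fin d)) (K : Finset (Fin d)) :
    EuclideanSpace ℝ (Fin d) :=
  WithLp.toLp 2 fun j => if j ∈ K then x j else 0

open Finset

theorem norm_sq_average_sub_le {ι E : Type*} [SeminormedAddCommGroup E] [NormedSpace ℝ E]
    {S : Finset ι} (hS : S.Nonempty) (v : ι → E) (y : E) :
    ‖(1 / (#S : ℝ)) • ∑ i ∈ S, v i - y‖ ^ 2 ≤ (1 / (#S : ℝ)) * ∑ i ∈ S, ‖v i - y‖ ^ 2 := by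
  have hcard : (0 : ℝ) < #S := by exact_mod_cast hS.card_pos
  have hcenter : (1 / (#S : ℝ)) • ∑ i ∈ S, v i - y = (1 / (#S : ℝ)) • ∑ i ∈ S, (v i - y) := by
    rw [sum_sub_distrib, smul_sub, sum_const, ← Nat.cast_smul_eq_nsmul ℝ, smul_smul,
      one_div_mul_cancel hcard.ne', one_smul]
  have hcauchy : ‖∑ i ∈ S, (v i - y)‖ ^ 2 ≤ #S * ∑ i ∈ S, ‖v i - y‖ ^ 2 :=
    (pow_le_pow_left₀ (norm_nonneg _) (norm_sum_le _ _) 2).trans sq_sum_le_card_mul_sum_sq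
  calc ‖(1 / (#S : ℝ)) • ∑ i ∈ S, v i - y‖ ^ 2
      = (1 / (#S : ℝ)) ^ 2 * ‖∑ i ∈ S, (v i - y)‖ ^ 2 := by
        rw [hcenter, norm_smul, mul_pow, Real.norm_of_nonneg (by positivity)]
    _ ≤ (1 / (#S : ℝ)) ^ 2 * (#S * ∑ i ∈ S, ‖v i - y‖ ^ 2) := by gcongr
    _ = (1 / (#S : ℝ)) * ∑ i ∈ S, ‖v i - y‖ ^ 2 := by field_simp

section Mask

variable {d : ℕ}

@[simp]
theorem mask_apply (x : EuclideanSpace ℝ (Fin d)) (K : Finset (Fin d)) (j : Fin d) :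
    mask x K j = if j ∈ K then x j else 0 :=
  rfl

theorem inner_mask_mask_compl (u v : EuclideanSpace ℝ (Fin d)) (K : Finset (Fin d)) :
    inner ℝ (mask u K) (mask v Kᶜ) = 0 := by
  rw [PiLp.inner_apply]
  refine sum_eq_zero fun j _ => ?_
  by_cases hj : j ∈ K <;> simp [hj]

theorem mask_sub_eq_mask_sub_sub_mask_compl (x y : EuclideanSpace ℝ (Fin d))
    (K : Finset (Fin d)) :
    mask x K - y = mask (x - y) K - mask y Kᶜ := by
  ext j
  by_cases hj : j ∈ K <;> simp [hj]

theorem norm_mask_sub_sq (x y : EuclideanSpace ℝ (Fin d)) (K : Finset (Fin d)) :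
    ‖mask x K - y‖ ^ 2 = ‖mask (x - y) K‖ ^ 2 + ‖mask y Kᶜ‖ ^ 2 := by
  rw [mask_sub_eq_mask_sub_sub_mask_compl, norm_sub_sq_real, inner_mask_mask_compl]
  ring

end Mask

/-- Key inequality in the proof of the paper's Lemma 1: for a nonempty finite index set `S`,
vectors `x i ∈ ℝ^d`, coordinate sets `K i`, and a reference vector `y`,
`‖(1/|S|)·∑_{i∈S} x_i|_{K_i} − y‖² ≤ (1/|S|)·∑_{i∈S} (‖(x_i − y)|_{K_i}‖² + ‖y|_{K_iᶜ}‖²)`. -/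
theorem stmt_5 {ι : Type*} (d : ℕ) (S : Finset ι) (hS : S.Nonempty)
    (x : ι → EuclideanSpace ℝ (Fin d)) (K : ι → Finset (Fin d))
    (y : EuclideanSpace ℝ (Fin d)) :
    ‖(1 / (S.card : ℝ)) • (∑ i ∈ S, mask (x i) (K i)) - y‖ ^ 2 ≤
      (1 / (S.card : ℝ)) * ∑ i ∈ S, (‖mask (x i - y) (K i)‖ ^ 2 + ‖mask y (K i)ᶜ‖ ^ 2) := by
  simpa only [norm_mask_sub_sq] using
    norm_sq_average_sub_le hS (fun i => mask (x i) (K i)) y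
end

section
/- Let E be a real Hilbert space and f : E → ℝ a differentiable function whose gradient ∇f is Lipschitz with constant μ > 0. Let 0 < η ≤ 1/(4μ), let θ, u ∈ E, and set θ' := θ − η·u. Then f(θ') ≤ f(θ) − (η/4)·‖∇f(θ)‖² + (3η/4)·‖u − ∇f(θ)‖². -/
/-!
The descent lemma `f (x + v) ≤ f x + ⟪∇f x, v⟫ + μ/2 ‖v‖²` holds because
`t ↦ f (x + t v) - t ⟪∇f x, v⟫ - μ t²/2 ‖v‖²` is antitone on `t ≥ 0`: by Cauchy–Schwarz and the
Lipschitz bound its derivative `⟪∇f (x + t v) - ∇f x, v⟫ - μ t ‖v‖²` is nonpositive. Applied with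
`v = -η u`, the step-size bound `μ η ≤ 1/4` makes the quadratic term at most `η ‖u‖² / 8`, and an
elementary inner-product inequality then trades `⟪∇f θ, u⟫` for `‖∇f θ‖²` and `‖u - ∇f θ‖²`.
-/

open scoped RealInnerProductSpace
open Set

section
variable {E : Type*} [NormedAddCommGroup E] [InnerProductSpace ℝ E] [CompleteSpace E]

theorem hasDerivAt_comp_add_smul_of_differentiable {f : E → ℝ} (hf : Differentiable ℝ f)
    (x v : E) (t : ℝ) :
    HasDerivAt (fun s : ℝ => f (x + s • v)) ⟪gradient f (x + t • v), v⟫ t := by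
  have hline : HasDerivAt (fun s : ℝ => x + s • v) v t := by
    simpa using ((hasDerivAt_id t).smul_const v).const_add x
  rw [inner_gradient_left]
  exact (hf _).hasFDerivAt.comp_hasDerivAt t hline

theorem le_add_inner_gradient_add_sq_of_lipschitz_gradient {f : E → ℝ} (hf : Differentiable ℝ f)
    {μ : ℝ} (hlip : ∀ x y, ‖gradient f x - gradient f y‖ ≤ μ * ‖x - y‖) (x v : E) :
    f (x + v) ≤ f x + ⟪gradient f x, v⟫ + μ / 2 * ‖v‖ ^ 2 := by
  set φ : ℝ → ℝ := fun t => f (x + t • v) - t * ⟪gradient f x, v⟫ - μ / 2 * t ^ 2 * ‖v‖ ^ 2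
  have hφ' : ∀ t, HasDerivAt φ
      (⟪gradient f (x + t • v) - gradient f x, v⟫ - μ * t * ‖v‖ ^ 2) t := by
    intro t
    have := (((hasDerivAt_comp_add_smul_of_differentiable hf x v t).sub
      ((hasDerivAt_id t).mul_const ⟪gradient f x, v⟫)).sub
      (((hasDerivAt_pow 2 t).const_mul (μ / 2)).mul_const (‖v‖ ^ 2)))
    refine this.congr_deriv ?_
    rw [inner_sub_left]
    norm_num only [pow_one]
    ring
  have hφ'_nonpos : ∀ t ∈ interior (Ici (0 : ℝ)),
      ⟪gradient f (x + t • v) - gradient f x, v⟫ - μ * t * ‖v‖ ^ 2 ≤ 0 := by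
    intro t ht
    rw [interior_Ici, mem_Ioi] at ht
    have hgrad : ‖gradient f (x + t • v) - gradient f x‖ ≤ μ * (t * ‖v‖) := by
      simpa [norm_smul, abs_of_pos ht] using hlip (x + t • v) x
    rw [sub_nonpos]
    calc ⟪gradient f (x + t • v) - gradient f x, v⟫
        ≤ ‖gradient f (x + t • v) - gradient f x‖ * ‖v‖ := real_inner_le_norm _ _
      _ ≤ μ * (t * ‖v‖) * ‖v‖ := by gcongr
      _ = μ * t * ‖v‖ ^ 2 := by ring
  have hanti : AntitoneOn φ (Ici 0) :=
    antitoneOn_of_hasDerivWithinAt_nonpos (convex_Ici 0)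
      (fun t _ => (hφ' t).continuousAt.continuousWithinAt)
      (fun t _ => (hφ' t).hasDerivWithinAt) hφ'_nonpos
  have hφ10 : φ 1 ≤ φ 0 := hanti self_mem_Ici (mem_Ici.2 zero_le_one) zero_le_one
  norm_num only [φ, one_smul, zero_smul, add_zero] at hφ10
  linarith
end

theorem neg_inner_add_sq_le_of_le {E : Type*} [NormedAddCommGroup E] [InnerProductSpace ℝ E]
    (g u : E) {c : ℝ} (hc : c ≤ 1 / 8) :
    -⟪g, u⟫ + c * ‖u‖ ^ 2 ≤ -(1 / 4) * ‖g‖ ^ 2 + 3 / 4 * ‖u - g‖ ^ 2 := by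
  have hcs : 2 * ⟪g, u⟫ ≤ ‖g‖ ^ 2 + ‖u‖ ^ 2 := by
    nlinarith [real_inner_le_norm g u, sq_nonneg (‖g‖ - ‖u‖)]
  rw [norm_sub_sq_real, real_inner_comm g u]
  nlinarith [mul_le_mul_of_nonneg_right hc (sq_nonneg ‖u‖)]

theorem stmt_15_general {E : Type*} [NormedAddCommGroup E] [InnerProductSpace ℝ E]
    [CompleteSpace E] (f : E → ℝ) (hf : Differentiable ℝ f)
    (μ : ℝ)
    (hlip : ∀ x y, ‖gradient f x - gradient f y‖ ≤ μ * ‖x - y‖)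
    (η : ℝ) (hη0 : 0 < η) (hη : η ≤ 1 / (4 * μ))
    (θ u θ' : E) (hθ' : θ' = θ - η • u) :
    f θ' ≤ f θ - (η / 4) * ‖gradient f θ‖ ^ 2 + (3 * η / 4) * ‖u - gradient f θ‖ ^ 2 := by
  have hμ : 0 < μ := by
    have : 0 < 1 / (4 * μ) := hη0.trans_le hη
    rw [one_div_pos] at this
    linarith
  have hμη : μ * η / 2 ≤ 1 / 8 := by
    rw [le_div_iff₀ (by positivity)] at hη
    linarith
  have hdescent := le_add_inner_gradient_add_sq_of_lipschitz_gradient hf hlip θ (-(η • u))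
  rw [← sub_eq_add_neg, ← hθ', inner_neg_right, real_inner_smul_right, norm_neg, norm_smul,
    Real.norm_of_nonneg hη0.le] at hdescent
  calc f θ' ≤ f θ + η * (-⟪gradient f θ, u⟫ + μ * η / 2 * ‖u‖ ^ 2) := by linarith
    _ ≤ f θ + η * (-(1 / 4) * ‖gradient f θ‖ ^ 2 + 3 / 4 * ‖u - gradient f θ‖ ^ 2) := by
        gcongr f θ + η * ?_; exact neg_inner_add_sq_le_of_le (gradient f θ) u hμη
    _ = _ := by ring

/-- One-step inexact-gradient descent inequality (deterministic core of the per-round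
descent estimate in the proof of the paper's Theorem 1): if `f` is differentiable on a
real Hilbert space with `μ`-Lipschitz gradient (`μ > 0`), `0 < η ≤ 1/(4μ)`, and
`θ' = θ − η·u`, then `f(θ') ≤ f(θ) − (η/4)·‖∇f(θ)‖² + (3η/4)·‖u − ∇f(θ)‖²`. -/
theorem stmt_15 {E : Type*} [NormedAddCommGroup E] [InnerProductSpace ℝ E]
    [CompleteSpace E] (f : E → ℝ) (hf : Differentiable ℝ f)
    (μ : ℝ) (hμ : 0 < μ)
    (hlip : ∀ x y, ‖gradient f x - gradient f y‖ ≤ μ * ‖x - y‖)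
    (η : ℝ) (hη0 : 0 < η) (hη : η ≤ 1 / (4 * μ))
    (θ u θ' : E) (hθ' : θ' = θ - η • u) :
    f θ' ≤ f θ - (η / 4) * ‖gradient f θ‖ ^ 2 + (3 * η / 4) * ‖u - gradient f θ‖ ^ 2 :=
  stmt_15_general f hf μ hlip η hη0 hη θ u θ' hθ'
end

section
/- Let E be a real Hilbert space and f : E → ℝ a differentiable function whose gradient ∇f is Lipschitz with constant μ > 0 and which is bounded below: f(x) ≥ f_* for all x ∈ E. Let 0 < η ≤ 1/(4μ), κ ≥ 0, T ≥ 1, and let θ⁰, θ¹, …, θ^T ∈ E and u⁰, …, u^{T−1} ∈ E satisfy θ^{t+1} = θ^t − η·u^t and ‖u^t − ∇f(θ^t)‖² ≤ κ for every 0 ≤ t ≤ T−1. Then (1/T)·∑_{t=0}^{T−1} ‖∇f(θ^t)‖² ≤ 4·(f(θ⁰) − f_*)/(T·η) + 3κ. -/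
/-!
By the mean value inequality, a `μ`-Lipschitz gradient gives the quadratic upper bound
`f (x + v) ≤ f x + ⟪∇f x, v⟫ + μ ‖v‖²`. For a step `x - η • u` with `μ η ≤ 1/4` this yields
the per-round descent `η/4 ‖∇f x‖² ≤ f x - f (x - η • u) + 3η/4 ‖u - ∇f x‖²`: the slack is
at least `η/2 (‖u‖² - ⟪∇f x, u⟫ + ‖∇f x‖²) ≥ 0`, so losing the factor `2` against the sharp bound
`μ/2 ‖v‖²` costs nothing. Summing over the rounds telescopes `f`, and `f ≥ f_*` bounds the result.
-/

open Finset InnerProductSpace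
open scoped RealInnerProductSpace

theorem sum_le_sub_add_mul_of_le_sub_succ_add {a F : ℕ → ℝ} {c : ℝ} {T : ℕ}
    (h : ∀ t < T, a t ≤ F t - F (t + 1) + c) :
    ∑ t ∈ range T, a t ≤ F 0 - F T + T * c := by
  calc ∑ t ∈ range T, a t ≤ ∑ t ∈ range T, (F t - F (t + 1) + c) :=
        sum_le_sum fun t ht => h t (mem_range.mp ht)
    _ = F 0 - F T + T * c := by
        rw [sum_add_distrib, sum_range_sub', sum_const, card_range, nsmul_eq_mul]

section LipschitzGradient

variable {E : Type*} [NormedAddCommGroup E] [InnerProductSpace ℝ E] [CompleteSpace E]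
  {f : E → ℝ} {μ : ℝ}

theorem abs_sub_sub_inner_gradient_le (hf : Differentiable ℝ f) (hμ : 0 ≤ μ)
    (hlip : ∀ x y, ‖gradient f x - gradient f y‖ ≤ μ * ‖x - y‖) (x v : E) :
    |f (x + v) - f x - ⟪gradient f x, v⟫| ≤ μ * ‖v‖ ^ 2 := by
  have hderiv : ∀ z ∈ Metric.closedBall x ‖v‖,
      HasFDerivWithinAt f (toDual ℝ E (gradient f z)) (Metric.closedBall x ‖v‖) z :=
    fun z _ => (hf z).hasGradientAt.hasFDerivAt.hasFDerivWithinAt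
  have hbound : ∀ z ∈ Metric.closedBall x ‖v‖,
      ‖toDual ℝ E (gradient f z) - toDual ℝ E (gradient f x)‖ ≤ μ * ‖v‖ := by
    intro z hz
    rw [← map_sub, LinearIsometryEquiv.norm_map]
    exact (hlip z x).trans
      (mul_le_mul_of_nonneg_left (by simpa [dist_eq_norm] using hz) hμ)
  have hmvt := (convex_closedBall x ‖v‖).norm_image_sub_le_of_norm_hasFDerivWithin_le'
    hderiv hbound (Metric.mem_closedBall_self (norm_nonneg v))
    (by simp [dist_eq_norm] : x + v ∈ Metric.closedBall x ‖v‖)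
  simpa [toDual_apply_apply, Real.norm_eq_abs, pow_two, mul_assoc] using hmvt

theorem inexact_gradient_step_descent (hf : Differentiable ℝ f) (hμ : 0 ≤ μ)
    (hlip : ∀ x y, ‖gradient f x - gradient f y‖ ≤ μ * ‖x - y‖) {η : ℝ} (hη : 0 < η)
    (hμη : μ * η ≤ 1 / 4) (x u : E) :
    η / 4 * ‖gradient f x‖ ^ 2 ≤
      f x - f (x - η • u) + 3 * η / 4 * ‖u - gradient f x‖ ^ 2 := by
  set g := gradient f x
  have hquad : f (x - η • u) ≤ f x - η * ⟪g, u⟫ + μ * η ^ 2 * ‖u‖ ^ 2 := by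
    have h := (abs_le.mp (abs_sub_sub_inner_gradient_le hf hμ hlip x (-(η • u)))).2
    rw [← sub_eq_add_neg, inner_neg_right, real_inner_smul_right, norm_neg, norm_smul,
      Real.norm_of_nonneg hη.le] at h
    linarith
  have hcurv : μ * η ^ 2 * ‖u‖ ^ 2 ≤ η / 4 * ‖u‖ ^ 2 := by
    have := mul_le_mul_of_nonneg_right hμη (by positivity : 0 ≤ η * ‖u‖ ^ 2)
    linarith
  have hinner : ⟪g, u⟫ ≤ ‖g‖ * ‖u‖ := real_inner_le_norm g u
  rw [norm_sub_sq_real, real_inner_comm]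
  nlinarith [sq_nonneg (‖g‖ - ‖u‖)]

end LipschitzGradient

theorem stmt_17_general {E : Type*} [NormedAddCommGroup E] [InnerProductSpace ℝ E]
    [CompleteSpace E] (f : E → ℝ) (hf : Differentiable ℝ f)
    (μ : ℝ)
    (hlip : ∀ x y, ‖gradient f x - gradient f y‖ ≤ μ * ‖x - y‖)
    (fstar : ℝ) (hbdd : ∀ x, fstar ≤ f x)
    (η : ℝ) (hη0 : 0 < η) (hη : η ≤ 1 / (4 * μ))
    (κ : ℝ) (T : ℕ) (hT : 1 ≤ T)
    (θ u : ℕ → E)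
    (hstep : ∀ t < T, θ (t + 1) = θ t - η • u t)
    (herr : ∀ t < T, ‖u t - gradient f (θ t)‖ ^ 2 ≤ κ) :
    (1 / (T : ℝ)) * ∑ t ∈ Finset.range T, ‖gradient f (θ t)‖ ^ 2 ≤
      4 * (f (θ 0) - fstar) / ((T : ℝ) * η) + 3 * κ := by
  have hμ : 0 < μ := by linarith [one_div_pos.mp (hη0.trans_le hη)]
  have hμη : μ * η ≤ 1 / 4 := by
    rw [le_div_iff₀ (by positivity)] at hη
    linarith
  have hsum : ∑ t ∈ range T, η / 4 * ‖gradient f (θ t)‖ ^ 2 ≤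
      f (θ 0) - f (θ T) + T * (3 * η / 4 * κ) := by
    refine sum_le_sub_add_mul_of_le_sub_succ_add (F := fun t => f (θ t)) fun t ht => ?_
    have hdesc := inexact_gradient_step_descent hf hμ.le hlip hη0 hμη (θ t) (u t)
    rw [← hstep t ht] at hdesc
    have herr' := mul_le_mul_of_nonneg_left (herr t ht) (by positivity : 0 ≤ 3 * η / 4)
    linarith
  rw [← mul_sum] at hsum
  have hT0 : (0 : ℝ) < T := by exact_mod_cast hT
  rw [one_div, inv_mul_le_iff₀ hT0]
  calc ∑ t ∈ range T, ‖gradient f (θ t)‖ ^ 2 ≤ 4 * (f (θ 0) - fstar) / η + 3 * T * κ := by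
        rw [div_add' _ _ _ hη0.ne', le_div_iff₀ hη0]
        linarith [hbdd (θ T)]
    _ = T * (4 * (f (θ 0) - fstar) / (T * η) + 3 * κ) := by field_simp

/-- Deterministic analogue of the paper's Theorem 1 ((f,R)-Byzantine resilience of FL
with LASA): if `f` is differentiable on a real Hilbert space with `μ`-Lipschitz gradient
(`μ > 0`) and bounded below by `f_*`, `0 < η ≤ 1/(4μ)`, and the iterates satisfy
`θ^{t+1} = θ^t − η·u^t` with `‖u^t − ∇f(θ^t)‖² ≤ κ` for all `t < T`, then
`(1/T)·∑_{t<T} ‖∇f(θ^t)‖² ≤ 4(f(θ⁰) − f_*)/(Tη) + 3κ`. -/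
theorem stmt_17 {E : Type*} [NormedAddCommGroup E] [InnerProductSpace ℝ E]
    [CompleteSpace E] (f : E → ℝ) (hf : Differentiable ℝ f)
    (μ : ℝ) (hμ : 0 < μ)
    (hlip : ∀ x y, ‖gradient f x - gradient f y‖ ≤ μ * ‖x - y‖)
    (fstar : ℝ) (hbdd : ∀ x, fstar ≤ f x)
    (η : ℝ) (hη0 : 0 < η) (hη : η ≤ 1 / (4 * μ))
    (κ : ℝ) (hκ : 0 ≤ κ) (T : ℕ) (hT : 1 ≤ T)
    (θ u : ℕ → E)
    (hstep : ∀ t < T, θ (t + 1) = θ t - η • u t)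
    (herr : ∀ t < T, ‖u t - gradient f (θ t)‖ ^ 2 ≤ κ) :
    (1 / (T : ℝ)) * ∑ t ∈ Finset.range T, ‖gradient f (θ t)‖ ^ 2 ≤
      4 * (f (θ 0) - fstar) / ((T : ℝ) * η) + 3 * κ :=
  stmt_17_general f hf μ hlip fstar hbdd η hη0 hη κ T hT θ u hstep herr
end
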